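/- Let n ≥ 1 be an integer and let z ∈ B with 1/2 < |z| < 1. If w ∈ B, w ≠ 0, satisfies |φ_w(z)| < 1/4, then, writing r = |z|, ξ = z/|z| and η = w/|w|, one has | |w| − r | ≤ (2/3)(1−r) and |1 − ⟨ξ,η⟩| ≤ 32(1−r). -/

import Mathlib

open MeasureTheory Metric Set
open scoped ENNReal

noncomputable section

instance euclideanComplexMeasurableSpace {n : ℕ} :
    MeasurableSpace (EuclideanSpace ℂ (Fin n)) := borel _

instance euclideanComplexBorelSpace {n : ℕ} :
    BorelSpace (EuclideanSpace ℂ (Fin n)) := ⟨rfl⟩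

/-- The Hermitian inner product `⟨z,w⟩ = ∑ j, z j * conj (w j)` from the paper. -/
def hip {n : ℕ} (z w : EuclideanSpace ℂ (Fin n)) : ℂ :=
  ∑ j, z j * (starRingEnd ℂ) (w j)

/-- Orthogonal projection `P_w` onto the complex line spanned by `w`
(equal to `0` when `w = 0`). -/
def Pw {n : ℕ} (w z : EuclideanSpace ℂ (Fin n)) : EuclideanSpace ℂ (Fin n) :=
  ((hip z w) / ((‖w‖ : ℂ) ^ 2)) • w

/-- The involutive automorphism `φ_w` of the unit ball. -/
def phi {n : ℕ} (w z : EuclideanSpace ℂ (Fin n)) : EuclideanSpace ℂ (Fin n) :=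
  (1 - hip z w)⁻¹ • (w - Pw w z - ((Real.sqrt (1 - ‖w‖ ^ 2) : ℝ) : ℂ) • (z - Pw w z))

/-- The radial function `g(z) = ((n+1)/(2n)) ∫_{|z|}^1 (1-t²)^{n-1} t^{-2n+1} dt`. -/
def gfun (n : ℕ) (z : EuclideanSpace ℂ (Fin n)) : ℝ :=
  ((n + 1) / (2 * n)) * ∫ t in (‖z‖)..(1 : ℝ), (1 - t ^ 2) ^ (n - 1) * t ^ (-2 * (n : ℤ) + 1)

/-- Green's function for the invariant Laplacian: `G(z,w) = g(φ_w(z))`. -/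
def Gker {n : ℕ} (z w : EuclideanSpace ℂ (Fin n)) : ℝ := gfun n (phi w z)

/-- The invariant Green potential of `μ`, as an `ℝ≥0∞`-valued function. -/
def Gpot {n : ℕ} (μ : Measure (EuclideanSpace ℂ (Fin n)))
    (z : EuclideanSpace ℂ (Fin n)) : ℝ≥0∞ :=
  ∫⁻ w in ball (0 : EuclideanSpace ℂ (Fin n)) 1, ENNReal.ofReal (Gker z w) ∂μ

/-- Surface measure on the unit sphere of `ℂⁿ`, normalized so that `σ(S) = 1`. -/
def sigmaS (n : ℕ) : Measure (sphere (0 : EuclideanSpace ℂ (Fin n)) 1) :=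
  ((volume : Measure (EuclideanSpace ℂ (Fin n))).toSphere univ)⁻¹ •
    (volume : Measure (EuclideanSpace ℂ (Fin n))).toSphere

/-- The Korányi region `C(ξ,δ) = {z ∈ B : |1 - ⟨z,ξ⟩| < δ}`. -/
def Cset {n : ℕ} (ξ : EuclideanSpace ℂ (Fin n)) (δ : ℝ) : Set (EuclideanSpace ℂ (Fin n)) :=
  {z | z ∈ ball (0 : EuclideanSpace ℂ (Fin n)) 1 ∧ ‖1 - hip z ξ‖ < δ}

/-- The weighted measure `λ(E) = ∫_E (1-|w|)^n dμ(w)`. -/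
def lamRM {n : ℕ} (μ : Measure (EuclideanSpace ℂ (Fin n)))
    (E : Set (EuclideanSpace ℂ (Fin n))) : ℝ≥0∞ :=
  ∫⁻ w in E, ENNReal.ofReal ((1 - ‖w‖) ^ n) ∂μ

/-- The `p`-th mean `m_p(r, G_μ)` of the Green potential over the unit sphere. -/
def mpG {n : ℕ} (p : ℝ) (μ : Measure (EuclideanSpace ℂ (Fin n))) (r : ℝ) : ℝ≥0∞ :=
  (∫⁻ ξ, (Gpot μ (r • (ξ : EuclideanSpace ℂ (Fin n)))) ^ p ∂(sigmaS n)) ^ (1 / p)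

/-- The anisotropic ball `D(ξ,δ) = {η ∈ S : d(ξ,η) < δ}` on the unit sphere,
where `d(a,b) = |1 - ⟨a,b⟩|^{1/2}`. -/
def Dset {n : ℕ} (ξ : sphere (0 : EuclideanSpace ℂ (Fin n)) 1) (δ : ℝ) :
    Set (sphere (0 : EuclideanSpace ℂ (Fin n)) 1) :=
  {η | ‖1 - hip (η : EuclideanSpace ℂ (Fin n)) (ξ : EuclideanSpace ℂ (Fin n))‖ < δ ^ 2}

/-!
Splitting `z` along `ℂ w` and its orthogonal complement gives the classical identity
`(1 - |φ_w(z)|²) |1 - ⟨z,w⟩|² = (1 - |w|²)(1 - |z|²)`. Since `|1 - ⟨z,w⟩| ≥ 1 - |z||w|` and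
`(1 - |z||w|)² - (1 - |z|²)(1 - |w|²) = (|w| - |z|)²`, it yields
`||w| - |z|| ≤ |φ_w(z)| (1 - |z||w|)`, hence the radial estimate. Together with that estimate the
identity also gives `|1 - ⟨z,w⟩| ≤ (8/3)(1 - |z|)`, and
`|z||w| (1 - ⟨ξ,η⟩) = (1 - ⟨z,w⟩) - (1 - |z||w|)` settles the angular estimate when `|z| > 15/16`;
for smaller `|z|` it is trivial because `|1 - ⟨ξ,η⟩| ≤ 2`.
-/

open scoped InnerProductSpace

variable {n : ℕ}

lemma hip_eq_inner (z w : EuclideanSpace ℂ (Fin n)) : hip z w = ⟪w, z⟫_ℂ := by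
  simp [hip, PiLp.inner_apply]

lemma hip_smul_smul (a b : ℝ) (z w : EuclideanSpace ℂ (Fin n)) :
    hip (a • z) (b • w) = a * b * hip z w := by
  simp only [hip_eq_inner, inner_smul_left_eq_smul, inner_smul_right_eq_smul, Complex.real_smul]
  ring

lemma norm_hip_le (z w : EuclideanSpace ℂ (Fin n)) : ‖hip z w‖ ≤ ‖z‖ * ‖w‖ := by
  rw [hip_eq_inner, mul_comm]
  exact norm_inner_le_norm w z

lemma hip_ne_one (z w : EuclideanSpace ℂ (Fin n)) (hz : ‖z‖ < 1) (hw : ‖w‖ ≤ 1) :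
    hip z w ≠ 1 := by
  intro h
  have := norm_hip_le z w
  rw [h, norm_one] at this
  nlinarith [norm_nonneg z]

lemma Pw_eq_starProjection (w z : EuclideanSpace ℂ (Fin n)) :
    Pw w z = (ℂ ∙ w).starProjection z := by
  rw [Submodule.starProjection_singleton, Pw, hip_eq_inner]
  push_cast
  rfl

lemma norm_Pw_mul_norm (w z : EuclideanSpace ℂ (Fin n)) :
    ‖Pw w z‖ * ‖w‖ = ‖hip z w‖ := by
  rcases eq_or_ne w 0 with rfl | hw
  · simp [hip]
  have : ‖w‖ ≠ 0 := norm_ne_zero_iff.mpr hw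
  rw [Pw, norm_smul, norm_div, norm_pow, Complex.norm_real, Real.norm_of_nonneg (norm_nonneg _)]
  field_simp

theorem norm_phi_numerator_sq (w z : EuclideanSpace ℂ (Fin n)) (hw : ‖w‖ ≤ 1) :
    ‖w - Pw w z - ((Real.sqrt (1 - ‖w‖ ^ 2) : ℝ) : ℂ) • (z - Pw w z)‖ ^ 2 =
      ‖1 - hip z w‖ ^ 2 - (1 - ‖w‖ ^ 2) * (1 - ‖z‖ ^ 2) := by
  set K := ℂ ∙ w
  have hwK : w ∈ K := Submodule.mem_span_singleton_self w
  have hPw := norm_Pw_mul_norm w z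
  rw [Pw_eq_starProjection] at hPw ⊢
  set P := K.starProjection z
  set t := Real.sqrt (1 - ‖w‖ ^ 2)
  have hperp {v : EuclideanSpace ℂ (Fin n)} (hv : v ∈ K) : ⟪v, z - P⟫_ℂ = 0 := by
    rw [← inner_conj_symm, K.starProjection_inner_eq_zero z v hv, map_zero]
  have hwP : ⟪w, P⟫_ℂ = hip z w := by
    have := hperp hwK
    rwa [inner_sub_right, sub_eq_zero, eq_comm, ← hip_eq_inner] at this
  have hpyth : ‖z‖ ^ 2 = ‖P‖ ^ 2 + ‖z - P‖ ^ 2 := by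
    conv_lhs => rw [← add_sub_cancel P z]
    rw [@norm_add_sq ℂ, hperp (K.starProjection_apply_mem z)]
    simp only [RCLike.re_to_complex, Complex.zero_re, mul_zero, add_zero]
  have hnum : ‖w - P - (t : ℂ) • (z - P)‖ ^ 2 = ‖w - P‖ ^ 2 + t ^ 2 * ‖z - P‖ ^ 2 := by
    rw [@norm_sub_sq ℂ, inner_smul_right, hperp (K.sub_mem hwK (K.starProjection_apply_mem z))]
    simp only [mul_zero, RCLike.re_to_complex, Complex.zero_re, sub_zero, Complex.coe_smul,
      norm_smul, Real.norm_eq_abs, mul_pow, sq_abs]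
  have ht : t ^ 2 = 1 - ‖w‖ ^ 2 := Real.sq_sqrt (by nlinarith [norm_nonneg w])
  rw [hnum, ht, @norm_sub_sq ℂ, hwP, @norm_sub_sq ℂ ℂ, ← hPw]
  simp only [RCLike.re_to_complex, norm_one, one_pow, RCLike.inner_apply, map_one, mul_one]
  linear_combination (‖w‖ ^ 2 - 1) * hpyth

theorem one_sub_norm_phi_sq_mul (w z : EuclideanSpace ℂ (Fin n)) (hw : ‖w‖ ≤ 1)
    (hc : hip z w ≠ 1) :
    (1 - ‖phi w z‖ ^ 2) * ‖1 - hip z w‖ ^ 2 = (1 - ‖w‖ ^ 2) * (1 - ‖z‖ ^ 2) := by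
  have hc' : ‖1 - hip z w‖ ≠ 0 := norm_ne_zero_iff.mpr (sub_ne_zero.mpr hc.symm)
  have hphi : ‖phi w z‖ * ‖1 - hip z w‖ =
      ‖w - Pw w z - ((Real.sqrt (1 - ‖w‖ ^ 2) : ℝ) : ℂ) • (z - Pw w z)‖ := by
    rw [phi, norm_smul, norm_inv, mul_right_comm, inv_mul_cancel₀ hc', one_mul]
  have := norm_phi_numerator_sq w z hw
  rw [← hphi] at this
  linear_combination -this

theorem abs_norm_sub_norm_le_norm_phi_mul (w z : EuclideanSpace ℂ (Fin n)) (hw : ‖w‖ ≤ 1)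
    (hz : ‖z‖ < 1) :
    |‖w‖ - ‖z‖| ≤ ‖phi w z‖ * (1 - ‖z‖ * ‖w‖) := by
  have hid := one_sub_norm_phi_sq_mul w z hw (hip_ne_one z w hz hw)
  set A := ‖phi w z‖
  set H := ‖1 - hip z w‖
  have hH : 1 - ‖z‖ * ‖w‖ ≤ H := by
    have := norm_sub_norm_le (1 : ℂ) (hip z w)
    rw [norm_one] at this
    linarith [norm_hip_le z w]
  have hrs : 0 < 1 - ‖z‖ * ‖w‖ := by nlinarith [norm_nonneg z, norm_nonneg w]
  have hA : A ^ 2 ≤ 1 := by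
    have : 0 ≤ (1 - A ^ 2) * H ^ 2 := by
      rw [hid]; exact mul_nonneg (by nlinarith [norm_nonneg w]) (by nlinarith [norm_nonneg z])
    nlinarith [pow_pos (hrs.trans_le hH) 2]
  apply abs_le_of_sq_le_sq _ (mul_nonneg (norm_nonneg _) hrs.le)
  have : (1 - A ^ 2) * (1 - ‖z‖ * ‖w‖) ^ 2 ≤ (1 - A ^ 2) * H ^ 2 :=
    mul_le_mul_of_nonneg_left (pow_le_pow_left₀ hrs.le hH 2) (by linarith)
  nlinarith

lemma abs_sub_le_of_four_mul_abs_sub_le {r s : ℝ} (hr0 : 0 ≤ r) (hr1 : r ≤ 1)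
    (h : 4 * |s - r| ≤ 1 - r * s) : |s - r| ≤ 2 / 3 * (1 - r) := by
  rcases le_total r s with hrs | hsr
  · rw [abs_of_nonneg (sub_nonneg.mpr hrs)] at h ⊢
    nlinarith
  · rw [abs_of_nonpos (sub_nonpos.mpr hsr)] at h ⊢
    nlinarith

theorem abs_norm_sub_norm_le_of_norm_phi_le (w z : EuclideanSpace ℂ (Fin n)) (hw : ‖w‖ ≤ 1)
    (hz : ‖z‖ < 1) (hphi : ‖phi w z‖ ≤ 1 / 4) :
    |‖w‖ - ‖z‖| ≤ 2 / 3 * (1 - ‖z‖) := by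
  refine abs_sub_le_of_four_mul_abs_sub_le (norm_nonneg z) hz.le ?_
  have := abs_norm_sub_norm_le_norm_phi_mul w z hw hz
  nlinarith [mul_le_mul_of_nonneg_left hw (norm_nonneg z)]

theorem norm_one_sub_hip_le_of_norm_phi_le (w z : EuclideanSpace ℂ (Fin n)) (hw : ‖w‖ ≤ 1)
    (hz : ‖z‖ < 1) (hphi : ‖phi w z‖ ≤ 1 / 4) :
    ‖1 - hip z w‖ ≤ 8 / 3 * (1 - ‖z‖) := by
  have hid := one_sub_norm_phi_sq_mul w z hw (hip_ne_one z w hz hw)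
  have hrad := abs_norm_sub_norm_le_of_norm_phi_le w z hw hz hphi
  rw [abs_le] at hrad
  have hA : ‖phi w z‖ ^ 2 ≤ 1 / 16 := by nlinarith [norm_nonneg (phi w z)]
  have hs := norm_nonneg w
  have hr := norm_nonneg z
  apply le_of_sq_le_sq _ (by linarith)
  calc ‖1 - hip z w‖ ^ 2 ≤ 16 / 15 * ((1 - ‖phi w z‖ ^ 2) * ‖1 - hip z w‖ ^ 2) := by
        nlinarith [sq_nonneg ‖1 - hip z w‖]
    _ = 16 / 15 * ((1 + ‖w‖) * (1 - ‖w‖) * ((1 + ‖z‖) * (1 - ‖z‖))) := by rw [hid]; ring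
    _ ≤ 16 / 15 * (2 * (5 / 3 * (1 - ‖z‖)) * (2 * (1 - ‖z‖))) := by
        gcongr <;> linarith
    _ = (8 / 3 * (1 - ‖z‖)) ^ 2 := by ring

lemma norm_one_sub_hip_normalize_mul (z w : EuclideanSpace ℂ (Fin n)) (hz : z ≠ 0) (hw : w ≠ 0) :
    ‖1 - hip (‖z‖⁻¹ • z) (‖w‖⁻¹ • w)‖ * (‖z‖ * ‖w‖) = ‖((‖z‖ * ‖w‖ : ℝ) : ℂ) - hip z w‖ := by
  have hz' : (‖z‖ : ℂ) ≠ 0 := by exact_mod_cast norm_ne_zero_iff.mpr hz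
  have hw' : (‖w‖ : ℂ) ≠ 0 := by exact_mod_cast norm_ne_zero_iff.mpr hw
  have hscale : ((‖z‖ * ‖w‖ : ℝ) : ℂ) * ((‖z‖⁻¹ : ℝ) : ℂ) * ((‖w‖⁻¹ : ℝ) : ℂ) = 1 := by
    push_cast
    field_simp
  calc ‖1 - hip (‖z‖⁻¹ • z) (‖w‖⁻¹ • w)‖ * (‖z‖ * ‖w‖)
        = ‖((‖z‖ * ‖w‖ : ℝ) : ℂ) * (1 - hip (‖z‖⁻¹ • z) (‖w‖⁻¹ • w))‖ := by
          rw [norm_mul, Complex.norm_real, Real.norm_of_nonneg (by positivity), mul_comm]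
    _ = ‖((‖z‖ * ‖w‖ : ℝ) : ℂ) - hip z w‖ := by
          rw [hip_smul_smul, mul_sub, mul_one, ← mul_assoc, ← mul_assoc, hscale, one_mul]

lemma norm_one_sub_hip_normalize_le_two (z w : EuclideanSpace ℂ (Fin n)) :
    ‖1 - hip (‖z‖⁻¹ • z) (‖w‖⁻¹ • w)‖ ≤ 2 := by
  have hunit (v : EuclideanSpace ℂ (Fin n)) : ‖‖v‖⁻¹ • v‖ ≤ 1 := by
    rcases eq_or_ne v 0 with rfl | hv
    · simp
    · exact (norm_smul_inv_norm hv).le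
  calc _ ≤ ‖(1 : ℂ)‖ + ‖hip (‖z‖⁻¹ • z) (‖w‖⁻¹ • w)‖ := norm_sub_le _ _
    _ ≤ 1 + 1 * 1 := by
      rw [norm_one]
      gcongr
      exact (norm_hip_le _ _).trans (mul_le_mul (hunit z) (hunit w) (norm_nonneg _) zero_le_one)
    _ = 2 := by norm_num

theorem statement10_general (n : ℕ) (z w : EuclideanSpace ℂ (Fin n))
    (hz : z ∈ ball (0 : EuclideanSpace ℂ (Fin n)) 1)
    (hw : w ∈ ball (0 : EuclideanSpace ℂ (Fin n)) 1) (hw0 : w ≠ 0)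
    (hphi : ‖phi w z‖ < 1 / 4) :
    |‖w‖ - ‖z‖| ≤ (2 / 3) * (1 - ‖z‖) ∧
    ‖1 - hip ((‖z‖⁻¹ : ℝ) • z) ((‖w‖⁻¹ : ℝ) • w)‖ ≤ 32 * (1 - ‖z‖) := by
  rw [mem_ball_zero_iff] at hz hw
  have hrad := abs_norm_sub_norm_le_of_norm_phi_le w z hw.le hz hphi.le
  refine ⟨hrad, ?_⟩
  rcases le_or_gt ‖z‖ (15 / 16) with hr | hr
  · linarith [norm_one_sub_hip_normalize_le_two z w]
  have hz0 : z ≠ 0 := norm_ne_zero_iff.mp (by linarith)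
  rw [abs_le] at hrad
  have hrs : 1 / 6 ≤ ‖z‖ * ‖w‖ := by nlinarith
  refine le_of_mul_le_mul_right ?_ (by linarith : 0 < ‖z‖ * ‖w‖)
  rw [norm_one_sub_hip_normalize_mul z w hz0 hw0]
  calc ‖((‖z‖ * ‖w‖ : ℝ) : ℂ) - hip z w‖ = ‖(1 - hip z w) - ((1 - ‖z‖ * ‖w‖ : ℝ) : ℂ)‖ := by
        congr 1; push_cast; ring
    _ ≤ ‖1 - hip z w‖ + (1 - ‖z‖ * ‖w‖) := by
        grw [norm_sub_le, Complex.norm_real, Real.norm_of_nonneg (by nlinarith)]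
    _ ≤ 8 / 3 * (1 - ‖z‖) + 8 / 3 * (1 - ‖z‖) := by
        gcongr
        · exact norm_one_sub_hip_le_of_norm_phi_le w z hw.le hz hphi.le
        · nlinarith
    _ ≤ 32 * (1 - ‖z‖) * (‖z‖ * ‖w‖) := by nlinarith

/-- Inclusion `B*(z,1/4) ⊆ K(z, (2/3)(1-r), √32 (1-r)^{1/2})`: if `|φ_w(z)| < 1/4` then
`||w| - r| ≤ (2/3)(1-r)` and `|1 - ⟨ξ,η⟩| ≤ 32(1-r)`, where `ξ = z/|z|`, `η = w/|w|`. -/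
theorem statement10 (n : ℕ) (hn : 1 ≤ n) (z w : EuclideanSpace ℂ (Fin n))
    (hz : z ∈ ball (0 : EuclideanSpace ℂ (Fin n)) 1) (hz2 : 1 / 2 < ‖z‖)
    (hw : w ∈ ball (0 : EuclideanSpace ℂ (Fin n)) 1) (hw0 : w ≠ 0)
    (hphi : ‖phi w z‖ < 1 / 4) :
    |‖w‖ - ‖z‖| ≤ (2 / 3) * (1 - ‖z‖) ∧
    ‖1 - hip ((‖z‖⁻¹ : ℝ) • z) ((‖w‖⁻¹ : ℝ) • w)‖ ≤ 32 * (1 - ‖z‖) :=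
  statement10_general n z w hz hw hw0 hphi
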